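/- arXiv:2409.05204 — 2 statements merged into one kernel-verified Lean document; each statement's English description precedes it below -/
import Mathlib

section
/- (Caffarelli–Crandall characteristics lemma) Let Ω ⊆ ℝ^N be open and φ : Ω → ℝ everywhere differentiable with |∇φ| = 1 in Ω. Then for every x₀ ∈ Ω there exists R > 0 such that for all t ∈ [−R, R], the point X(t) = x₀ + t∇φ(x₀) lies in Ω, ∇φ(X(t)) = ∇φ(x₀), and φ(X(t)) = φ(x₀) + t. -/
/-!
Let `m(s)` be the maximum of `φ` over the closed ball of radius `s` around `x₀`. Since `φ` is
1-Lipschitz, `m(s) ≤ φ x₀ + s`. Conversely, at a maximiser `y` for radius `s`, moving from `y` along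
the unit vector `∇φ y` raises `φ` at unit rate while staying in the ball of radius `s + h`, so the
right Dini derivative of `m` is at least 1 and `m(s) = φ x₀ + s`. A maximiser `y` for radius `t` then
satisfies `φ y - φ x₀ = ‖y - x₀‖ = t`, which forces `φ` to increase at unit rate along the segment
`[x₀, y]`; the derivative of `φ` at `x₀` in the direction of that segment is thus `1`, and
`∇φ x₀ = (y - x₀) / t` by the equality case of Cauchy–Schwarz. Applying this to `-φ` gives `t < 0`,
and applying it again at the points of the line gives the constancy of `∇φ` along it.
-/

open Set Metric Filter Topology
open scoped RealInnerProductSpace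

theorem add_mul_sub_le_of_frequently_lt_slope {g : ℝ → ℝ} {a b c : ℝ}
    (hg : ContinuousOn g (Icc a b))
    (hslope : ∀ x ∈ Ico a b, ∀ r < c, ∃ᶠ z in 𝓝[>] x, r < slope g x z) :
    ∀ x ∈ Icc a b, g a + c * (x - a) ≤ g x := by
  have hB : ∀ x, HasDerivWithinAt (fun x => -g a - c * (x - a)) (-c) (Ici x) x := fun x => by
    simpa using (((hasDerivWithinAt_id x (Ici x)).sub_const a).const_mul c).const_sub (-g a)
  have key := image_le_of_liminf_slope_right_le_deriv_boundary (f := fun x => -g x)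
    hg.neg (by simp) (by fun_prop) (fun x _ => hB x)
    (fun x hx r hr => (hslope x hx (-r) (by linarith)).mono fun z hz => by
      rw [slope_neg]; linarith)
  intro x hx
  linarith [key hx]

theorem LipschitzOnWith.le_add_norm_sub {E : Type*} [SeminormedAddCommGroup E] {φ : E → ℝ}
    {s : Set E} (h : LipschitzOnWith 1 φ s) {x y : E} (hx : x ∈ s) (hy : y ∈ s) :
    φ x ≤ φ y + ‖x - y‖ := by
  simpa [dist_eq_norm] using h.le_add_mul hx hy

theorem LipschitzOnWith.apply_add_smul_sub_eq {E : Type*} [NormedAddCommGroup E]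
    [NormedSpace ℝ E] {φ : E → ℝ} {s : Set E} (h : LipschitzOnWith 1 φ s) (hs : Convex ℝ s)
    {x y : E} (hx : x ∈ s) (hy : y ∈ s) (hxy : φ y = φ x + ‖y - x‖) {c : ℝ}
    (hc : c ∈ Icc (0 : ℝ) 1) : φ (x + c • (y - x)) = φ x + c * ‖y - x‖ := by
  have hz : x + c • (y - x) ∈ s := hs.add_smul_sub_mem hx hy hc
  have hupper := h.le_add_norm_sub hz hx
  have hlower := h.le_add_norm_sub hy hz
  rw [add_sub_cancel_left, norm_smul, Real.norm_of_nonneg hc.1] at hupper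
  rw [show y - (x + c • (y - x)) = (1 - c) • (y - x) by module, norm_smul,
    Real.norm_of_nonneg (sub_nonneg.2 hc.2)] at hlower
  linarith

theorem add_smul_mem_closedBall {E : Type*} [SeminormedAddCommGroup E] [NormedSpace ℝ E]
    {x u : E} (hu : ‖u‖ = 1) {t R : ℝ} (ht : |t| ≤ R) : x + t • u ∈ closedBall x R := by
  rwa [mem_closedBall, dist_self_add_left, norm_smul, hu, mul_one, Real.norm_eq_abs]

section BallMax

variable {α : Type*} [MetricSpace α] {φ : α → ℝ} {x₀ : α} {R s s' : ℝ}

/-- Meaningful only where `φ` is bounded above on the ball: otherwise `sSup` returns `0`. -/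
noncomputable def ballMax (φ : α → ℝ) (x₀ : α) (s : ℝ) : ℝ := sSup (φ '' closedBall x₀ s)

theorem ballMax_zero : ballMax φ x₀ 0 = φ x₀ := by
  simp [ballMax, closedBall_zero]

theorem ballMax_le (hs : 0 ≤ s) {c : ℝ} (h : ∀ z ∈ closedBall x₀ s, φ z ≤ c) :
    ballMax φ x₀ s ≤ c :=
  csSup_le ((nonempty_closedBall.2 hs).image φ) (forall_mem_image.2 h)

variable [ProperSpace α]

theorem le_ballMax (hφ : ContinuousOn φ (closedBall x₀ R)) (hs : s ≤ R) {z : α}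
    (hz : z ∈ closedBall x₀ s) : φ z ≤ ballMax φ x₀ s :=
  le_csSup (((isCompact_closedBall x₀ s).image_of_continuousOn
    (hφ.mono (closedBall_subset_closedBall hs))).bddAbove) (mem_image_of_mem φ hz)

theorem exists_eq_ballMax (hφ : ContinuousOn φ (closedBall x₀ R)) (hs₀ : 0 ≤ s) (hs : s ≤ R) :
    ∃ y ∈ closedBall x₀ s, φ y = ballMax φ x₀ s := by
  obtain ⟨y, hy, hmax⟩ := (isCompact_closedBall x₀ s).exists_isMaxOn
    (nonempty_closedBall.2 hs₀) (hφ.mono (closedBall_subset_closedBall hs))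
  exact ⟨y, hy, le_antisymm (le_ballMax hφ hs hy) (ballMax_le hs₀ hmax)⟩

theorem ballMax_mono (hφ : ContinuousOn φ (closedBall x₀ R)) (hs' : 0 ≤ s') (h : s' ≤ s)
    (hs : s ≤ R) : ballMax φ x₀ s' ≤ ballMax φ x₀ s :=
  ballMax_le hs' fun _ hz => le_ballMax hφ hs (closedBall_subset_closedBall h hz)

end BallMax

section BallMaxNormed

variable {E : Type*} [NormedAddCommGroup E] [NormedSpace ℝ E] [ProperSpace E] {φ : E → ℝ}
  {x₀ : E} {R s s' : ℝ}

theorem ballMax_le_add (hφ : LipschitzOnWith 1 φ (closedBall x₀ R)) (hs' : 0 ≤ s')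
    (h : s' ≤ s) (hs : s ≤ R) : ballMax φ x₀ s ≤ ballMax φ x₀ s' + (s - s') := by
  refine ballMax_le (hs'.trans h) fun y hy => ?_
  have hyR := closedBall_subset_closedBall hs hy
  rw [← add_sub_cancel s' s, ← add_zero x₀, ← closedBall_add_closedBall hs' (sub_nonneg.2 h)]
    at hy
  obtain ⟨z, hz, w, hw, rfl⟩ := hy
  have hzw := hφ.le_add_norm_sub hyR (closedBall_subset_closedBall (h.trans hs) hz)
  rw [add_sub_cancel_left] at hzw
  linarith [le_ballMax hφ.continuousOn (h.trans hs) hz, mem_closedBall_zero_iff.1 hw]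

theorem continuousOn_ballMax (hφ : LipschitzOnWith 1 φ (closedBall x₀ R)) :
    ContinuousOn (ballMax φ x₀) (Icc 0 R) := by
  refine (LipschitzOnWith.of_le_add fun s hs s' hs' => ?_).continuousOn
  rcases le_total s s' with h | h
  · linarith [ballMax_mono hφ.continuousOn hs.1 h hs'.2, dist_nonneg (x := s) (y := s')]
  · linarith [ballMax_le_add hφ hs'.1 h hs.2, Real.dist_eq s s', le_abs_self (s - s')]

end BallMaxNormed

section Gradient

variable {E : Type*} [NormedAddCommGroup E] [InnerProductSpace ℝ E] [CompleteSpace E]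
  {φ : E → ℝ} {x u : E}

theorem HasGradientAt.neg {φ' : E} (h : HasGradientAt φ φ' x) :
    HasGradientAt (fun y => -φ y) (-φ') x := by
  rw [hasGradientAt_iff_hasFDerivAt, map_neg]
  exact h.hasFDerivAt.neg

theorem DifferentiableAt.hasDerivAt_comp_add_smul (h : DifferentiableAt ℝ φ x) :
    HasDerivAt (fun s : ℝ => φ (x + s • u)) ⟪gradient φ x, u⟫ 0 := by
  have hline : HasDerivAt (fun s : ℝ => x + s • u) u 0 := by
    simpa using ((hasDerivAt_id (0 : ℝ)).smul_const u).const_add x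
  have hφ : HasFDerivAt φ (fderiv ℝ φ x) (x + (0 : ℝ) • u) := by simpa using h.hasFDerivAt
  rw [inner_gradient_left]
  exact hφ.comp_hasDerivAt 0 hline

theorem gradient_eq_of_eventually_eq_add (hφ : DifferentiableAt ℝ φ x)
    (hx : ‖gradient φ x‖ = 1) (hu : ‖u‖ = 1)
    (h : ∀ᶠ s in 𝓝[≥] (0 : ℝ), φ (x + s • u) = φ x + s) : gradient φ x = u := by
  have hline : HasDerivWithinAt (fun s : ℝ => φ (x + s • u)) 1 (Ici 0) 0 :=
    ((hasDerivAt_id (0 : ℝ)).const_add (φ x)).hasDerivWithinAt.congr_of_eventuallyEq h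
      (by simp)
  exact (inner_eq_one_iff_of_norm_eq_one hx hu).1 <|
    (uniqueDiffWithinAt_Ici 0).eq_deriv _ hφ.hasDerivAt_comp_add_smul.hasDerivWithinAt hline

end Gradient

section Eikonal

variable {E : Type*} [NormedAddCommGroup E] [InnerProductSpace ℝ E] [CompleteSpace E]

def IsEikonalOn (φ : E → ℝ) (s : Set E) : Prop :=
  ∀ x ∈ s, DifferentiableAt ℝ φ x ∧ ‖gradient φ x‖ = 1

variable {φ : E → ℝ} {s : Set E} {x₀ : E} {R t : ℝ}

theorem IsEikonalOn.neg (h : IsEikonalOn φ s) : IsEikonalOn (fun y => -φ y) s := fun x hx =>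
  ⟨(h x hx).1.neg, by rw [(h x hx).1.hasGradientAt.neg.gradient, norm_neg, (h x hx).2]⟩

theorem IsEikonalOn.lipschitzOnWith (h : IsEikonalOn φ s) (hs : Convex ℝ s) :
    LipschitzOnWith 1 φ s :=
  hs.lipschitzOnWith_of_nnnorm_fderiv_le (fun x hx => (h x hx).1) fun x hx => by
    rw [← toDual_gradient, LinearIsometryEquiv.nnnorm_map, ← NNReal.coe_le_coe, coe_nnnorm,
      (h x hx).2, NNReal.coe_one]

theorem IsEikonalOn.gradient_eq_of_eq_add_norm_sub (h : IsEikonalOn φ s) (hs : Convex ℝ s)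
    {x y : E} (hx : x ∈ s) (hy : y ∈ s) (hxy : φ y = φ x + ‖y - x‖) (hne : y ≠ x) :
    gradient φ x = ‖y - x‖⁻¹ • (y - x) := by
  have hd : 0 < ‖y - x‖ := norm_pos_iff.2 (sub_ne_zero.2 hne)
  refine gradient_eq_of_eventually_eq_add (h x hx).1 (h x hx).2
    (norm_smul_inv_norm (sub_ne_zero.2 hne)) ?_
  filter_upwards [Icc_mem_nhdsGE hd] with c hc
  have hseg := (h.lipschitzOnWith hs).apply_add_smul_sub_eq hs hx hy hxy
    (c := c / ‖y - x‖) ⟨div_nonneg hc.1 hd.le, (div_le_one hd).2 hc.2⟩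
  rw [smul_smul, ← div_eq_mul_inv, hseg, div_mul_cancel₀ _ hd.ne']

theorem IsEikonalOn.frequently_lt_slope_ballMax [ProperSpace E]
    (h : IsEikonalOn φ (closedBall x₀ R)) {x : ℝ} (hx : x ∈ Ico 0 R) {r : ℝ} (hr : r < 1) :
    ∃ᶠ z in 𝓝[>] x, r < slope (ballMax φ x₀) x z := by
  have hcont := (h.lipschitzOnWith (convex_closedBall x₀ R)).continuousOn
  obtain ⟨y, hy, hφy⟩ := exists_eq_ballMax hcont hx.1 hx.2.le
  have hyR := closedBall_subset_closedBall hx.2.le hy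
  set u := gradient φ y
  have hu : ‖u‖ = 1 := (h y hyR).2
  set ℓ : ℝ → ℝ := fun z => φ (y + (z - x) • u)
  have hℓ : HasDerivAt ℓ 1 x := by
    have := (h y hyR).1.hasDerivAt_comp_add_smul (u := u)
    rw [real_inner_self_eq_norm_sq, hu, one_pow, ← sub_self x] at this
    exact this.comp_sub_const x x
  have hℓ_slope : ∀ᶠ z in 𝓝[>] x, r < slope ℓ x z :=
    (hℓ.tendsto_slope.mono_left (nhdsGT_le_nhdsNE x)).eventually (Ioi_mem_nhds hr)
  refine (hℓ_slope.and (Ioo_mem_nhdsGT hx.2)).frequently.mono fun z ⟨hrz, hz⟩ => ?_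
  have hmem : y + (z - x) • u ∈ closedBall x₀ z := by
    rw [mem_closedBall] at hy ⊢
    calc dist (y + (z - x) • u) x₀ ≤ dist (y + (z - x) • u) y + dist y x₀ := dist_triangle _ _ _
      _ ≤ z := by
        rw [dist_self_add_left, norm_smul, hu, mul_one, Real.norm_of_nonneg (by linarith [hz.1])]
        linarith
  have hℓz : ℓ z ≤ ballMax φ x₀ z := le_ballMax hcont hz.2.le hmem
  have hℓx : ℓ x = ballMax φ x₀ x := by simp [ℓ, hφy]
  rw [slope_def_field] at hrz ⊢
  exact hrz.trans_le (div_le_div_of_nonneg_right (by linarith) (by linarith [hz.1]))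

theorem IsEikonalOn.ballMax_eq [ProperSpace E] (h : IsEikonalOn φ (closedBall x₀ R))
    (ht : t ∈ Icc 0 R) : ballMax φ x₀ t = φ x₀ + t := by
  have hlip := h.lipschitzOnWith (convex_closedBall x₀ R)
  have hupper := ballMax_le_add hlip le_rfl ht.1 ht.2
  have hlower := add_mul_sub_le_of_frequently_lt_slope (continuousOn_ballMax hlip)
    (fun x hx r hr => h.frequently_lt_slope_ballMax hx hr) t ht
  rw [ballMax_zero] at hupper hlower
  linarith

theorem IsEikonalOn.exists_norm_sub_eq_and_eq_add [ProperSpace E]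
    (h : IsEikonalOn φ (closedBall x₀ R)) (ht : t ∈ Icc 0 R) :
    ∃ y ∈ closedBall x₀ R, ‖y - x₀‖ = t ∧ φ y = φ x₀ + t := by
  have hlip := h.lipschitzOnWith (convex_closedBall x₀ R)
  obtain ⟨y, hy, hφy⟩ := exists_eq_ballMax hlip.continuousOn ht.1 ht.2
  rw [h.ballMax_eq ht] at hφy
  have hyR := closedBall_subset_closedBall ht.2 hy
  have hlower := hlip.le_add_norm_sub hyR (mem_closedBall_self (ht.1.trans ht.2))
  refine ⟨y, hyR, le_antisymm ?_ (by linarith), hφy⟩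
  rw [← dist_eq_norm]
  exact hy

theorem IsEikonalOn.apply_add_smul_gradient_of_nonneg [ProperSpace E]
    (h : IsEikonalOn φ (closedBall x₀ R)) (ht : t ∈ Icc 0 R) :
    φ (x₀ + t • gradient φ x₀) = φ x₀ + t := by
  rcases ht.1.eq_or_lt with rfl | htpos
  · simp
  obtain ⟨y, hy, hyt, hφy⟩ := h.exists_norm_sub_eq_and_eq_add ht
  have hx₀ := mem_closedBall_self (ht.1.trans ht.2) (x := x₀)
  have hgrad := h.gradient_eq_of_eq_add_norm_sub (convex_closedBall x₀ R) hx₀ hy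
    (by rw [hyt, hφy]) (sub_ne_zero.1 (norm_pos_iff.1 (hyt ▸ htpos)))
  rw [hgrad, hyt, smul_smul, mul_inv_cancel₀ htpos.ne', one_smul, add_sub_cancel, hφy]

theorem IsEikonalOn.apply_add_smul_gradient [ProperSpace E]
    (h : IsEikonalOn φ (closedBall x₀ R)) (ht : t ∈ Icc (-R) R) :
    φ (x₀ + t • gradient φ x₀) = φ x₀ + t := by
  rcases le_total 0 t with htpos | htneg
  · exact h.apply_add_smul_gradient_of_nonneg ⟨htpos, ht.2⟩
  have hx₀ := mem_closedBall_self (x := x₀) (by linarith [ht.1] : 0 ≤ R)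
  have hneg := h.neg.apply_add_smul_gradient_of_nonneg (t := -t) ⟨by linarith, by linarith [ht.1]⟩
  rw [(h x₀ hx₀).1.hasGradientAt.neg.gradient, neg_smul_neg] at hneg
  linarith

theorem IsEikonalOn.gradient_add_smul_gradient [ProperSpace E]
    (h : IsEikonalOn φ (closedBall x₀ R)) (ht : t ∈ Ico (-R) R) :
    gradient φ (x₀ + t • gradient φ x₀) = gradient φ x₀ := by
  have hx₀ := mem_closedBall_self (x := x₀) (by linarith [ht.1, ht.2] : 0 ≤ R)
  have hu : ‖gradient φ x₀‖ = 1 := (h x₀ hx₀).2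
  have hx₁ := add_smul_mem_closedBall (x := x₀) hu (abs_le.2 ⟨ht.1, ht.2.le⟩)
  refine gradient_eq_of_eventually_eq_add (h _ hx₁).1 (h _ hx₁).2 hu ?_
  filter_upwards [Icc_mem_nhdsGE (sub_pos.2 ht.2)] with s hs
  rw [add_assoc, ← add_smul, h.apply_add_smul_gradient ⟨by linarith [ht.1, hs.1], by
    linarith [hs.2]⟩, h.apply_add_smul_gradient ⟨ht.1, ht.2.le⟩, add_assoc]

end Eikonal

theorem caffarelli_crandall_characteristics {N : ℕ} {Ω : Set (EuclideanSpace ℝ (Fin N))}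
    (hΩ : IsOpen Ω) (φ : EuclideanSpace ℝ (Fin N) → ℝ)
    (hdiff : ∀ x ∈ Ω, DifferentiableAt ℝ φ x)
    (heik : ∀ x ∈ Ω, ‖gradient φ x‖ = 1) :
    ∀ x₀ ∈ Ω, ∃ R > (0:ℝ), ∀ t ∈ Icc (-R) R,
      x₀ + t • gradient φ x₀ ∈ Ω ∧
      gradient φ (x₀ + t • gradient φ x₀) = gradient φ x₀ ∧
      φ (x₀ + t • gradient φ x₀) = φ x₀ + t := by
  intro x₀ hx₀
  obtain ⟨R, hR, hball⟩ := nhds_basis_closedBall.mem_iff.1 (hΩ.mem_nhds hx₀)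
  have h : IsEikonalOn φ (closedBall x₀ R) := fun x hx => ⟨hdiff x (hball hx), heik x (hball hx)⟩
  refine ⟨R / 2, half_pos hR, fun t ht => ⟨?_, ?_, ?_⟩⟩
  · exact hball (add_smul_mem_closedBall (heik x₀ hx₀)
      (abs_le.2 ⟨by linarith [ht.1], by linarith [ht.2]⟩))
  · exact h.gradient_add_smul_gradient ⟨by linarith [ht.1], by linarith [ht.2]⟩
  · exact h.apply_add_smul_gradient ⟨by linarith [ht.1], by linarith [ht.2]⟩
end

section
/- Let Ω ⊆ ℝ^N be open and φ : Ω → ℝ everywhere differentiable with |∇φ| = 1 in Ω. Then ∇φ is continuous on Ω, i.e., φ is C¹ on Ω. -/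
/-!
On a closed ball `B(x, ρ)` where `‖Dφ‖ = 1`, `φ` is `1`-Lipschitz, and for `0 ≤ a < 1` the function
`φ - a‖· - x‖` attains its maximum over the ball on the sphere, because at an interior maximum
`‖Dφ‖ ≤ a`. Letting `a → 1`, some `y` on the sphere has `φ y = φ x + ρ`; then `φ` grows with unit
slope along the segment `[x, y]`, so `Dφ(x)` takes the value `1` on the unit vector pointing to `y`,
which must therefore be `∇φ(x)`. Hence `φ (x + t ∇φ(x)) = φ x + t` for `0 ≤ t ≤ ρ`, for all `x`
near a given `x₀`. Since `φ` is `1`-Lipschitz this identity passes to any cluster point `p` of `∇φ`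
at `x₀`, forcing `p = ∇φ(x₀)`; compactness of the unit sphere then gives continuity at `x₀`.
-/

open Metric Set Filter Topology

section NormedSpace

variable {F : Type*} [NormedAddCommGroup F] [NormedSpace ℝ F]

theorem norm_fderiv_le_of_isLocalMax_sub {φ g : F → ℝ} {y : F} {K : ℝ} (hK : 0 ≤ K)
    (hφ : DifferentiableAt ℝ φ y) (hg : ∀ z, g z - g y ≤ K * ‖z - y‖)
    (hmax : IsLocalMax (fun z => φ z - g z) y) : ‖fderiv ℝ φ y‖ ≤ K := by
  have hslope_le : ∀ v, fderiv ℝ φ y v ≤ K * ‖v‖ := by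
    intro v
    have hline : Tendsto (fun t : ℝ => y + t • v) (𝓝[>] 0) (𝓝 y) :=
      tendsto_nhdsWithin_of_tendsto_nhds
        ((continuous_const.add (continuous_id.smul continuous_const)).tendsto' 0 y (by simp))
    refine le_of_tendsto (hφ.hasFDerivAt.hasLineDerivAt v).tendsto_slope_zero_right ?_
    filter_upwards [hline.eventually hmax, self_mem_nhdsWithin] with t hmax_t (ht : 0 < t)
    have hg_t := hg (y + t • v)
    rw [add_sub_cancel_left, norm_smul, Real.norm_of_nonneg ht.le] at hg_t
    rw [smul_eq_mul, inv_mul_le_iff₀ ht]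
    nlinarith
  refine ContinuousLinearMap.opNorm_le_bound _ hK fun v => abs_le.2 ⟨?_, hslope_le v⟩
  have := hslope_le (-v)
  rw [map_neg, norm_neg] at this
  linarith

theorem add_smul_mem_closedBall_s9 {x w : F} {t ρ : ℝ} (hw : ‖w‖ = 1) (ht₀ : 0 ≤ t) (htρ : t ≤ ρ) :
    x + t • w ∈ closedBall x ρ := by
  simpa [dist_eq_norm, norm_smul, hw, abs_of_nonneg ht₀] using htρ

theorem fderiv_apply_eq_one_of_forall_apply_add_smul {φ : F → ℝ} {x w : F} {δ : ℝ}
    (hφ : DifferentiableAt ℝ φ x) (hδ : 0 < δ)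
    (hray : ∀ t ∈ Icc 0 δ, φ (x + t • w) = φ x + t) : fderiv ℝ φ x w = 1 := by
  refine tendsto_nhds_unique (hφ.hasFDerivAt.hasLineDerivAt w).tendsto_slope_zero_right
    (tendsto_const_nhds.congr' ?_)
  filter_upwards [Ioo_mem_nhdsGT hδ] with t ht
  rw [hray t (Ioo_subset_Icc_self ht), add_sub_cancel_left, smul_eq_mul,
    inv_mul_cancel₀ ht.1.ne']

def EikonalOn (φ : F → ℝ) (s : Set F) : Prop :=
  ∀ y ∈ s, DifferentiableAt ℝ φ y ∧ ‖fderiv ℝ φ y‖ = 1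

namespace EikonalOn

variable {φ : F → ℝ} {s : Set F}

theorem mono (h : EikonalOn φ s) {t : Set F} (hts : t ⊆ s) : EikonalOn φ t :=
  fun y hy => h y (hts hy)

theorem continuousOn (h : EikonalOn φ s) : ContinuousOn φ s :=
  fun y hy => (h y hy).1.continuousAt.continuousWithinAt

theorem abs_sub_le_norm_sub (h : EikonalOn φ s) (hs : Convex ℝ s) {a b : F} (ha : a ∈ s)
    (hb : b ∈ s) : |φ b - φ a| ≤ ‖b - a‖ := by
  simpa using hs.norm_image_sub_le_of_norm_fderiv_le (fun y hy => (h y hy).1)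
    (fun y hy => (h y hy).2.le) ha hb

variable {x : F} {ρ : ℝ}

theorem exists_mem_sphere_add_mul_le [ProperSpace F] (h : EikonalOn φ (closedBall x ρ))
    (hρ : 0 ≤ ρ) {a : ℝ} (ha₀ : 0 ≤ a) (ha₁ : a < 1) : ∃ y ∈ sphere x ρ, φ x + a * ρ ≤ φ y := by
  have hcont : ContinuousOn (fun z => φ z - a * ‖z - x‖) (closedBall x ρ) :=
    h.continuousOn.sub (by fun_prop)
  obtain ⟨y, hy, hmax⟩ :=
    (isCompact_closedBall x ρ).exists_isMaxOn ⟨x, mem_closedBall_self hρ⟩ hcont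
  have hyρ : dist y x = ρ := by
    refine (mem_closedBall.1 hy).antisymm (not_lt.1 fun hlt => ?_)
    have hcone : ∀ z, a * ‖z - x‖ - a * ‖y - x‖ ≤ a * ‖z - y‖ := fun z => by
      rw [← mul_sub]
      exact mul_le_mul_of_nonneg_left
        ((norm_sub_norm_le _ _).trans_eq (by rw [sub_sub_sub_cancel_right])) ha₀
    have := norm_fderiv_le_of_isLocalMax_sub ha₀ (h y hy).1 hcone
      (hmax.isLocalMax (closedBall_mem_nhds_of_mem hlt))
    linarith [(h y hy).2]
  refine ⟨y, hyρ, ?_⟩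
  have : φ x - a * ‖x - x‖ ≤ φ y - a * ‖y - x‖ := hmax (mem_closedBall_self hρ)
  rw [sub_self, norm_zero, ← dist_eq_norm, hyρ] at this
  linarith

theorem exists_mem_sphere_eq_add [ProperSpace F] (h : EikonalOn φ (closedBall x ρ))
    (hρ : 0 ≤ ρ) : ∃ y ∈ sphere x ρ, φ y = φ x + ρ := by
  -- `a = 0` shows the sphere is nonempty without assuming `F` nontrivial
  obtain ⟨y₀, hy₀, -⟩ := h.exists_mem_sphere_add_mul_le hρ le_rfl one_pos
  obtain ⟨y, hy, hmax⟩ := (isCompact_sphere x ρ).exists_isMaxOn ⟨y₀, hy₀⟩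
    (h.continuousOn.mono sphere_subset_closedBall)
  refine ⟨y, hy, le_antisymm ?_ ?_⟩
  · have := h.abs_sub_le_norm_sub (convex_closedBall x ρ) (mem_closedBall_self hρ)
      (sphere_subset_closedBall hy)
    rw [← dist_eq_norm, mem_sphere.1 hy] at this
    linarith [le_abs_self (φ y - φ x)]
  · have hlim : Tendsto (fun a : ℝ => φ x + a * ρ) (𝓝[<] 1) (𝓝 (φ x + ρ)) :=
      tendsto_nhdsWithin_of_tendsto_nhds
        ((continuous_const.add (continuous_id.mul continuous_const)).tendsto' 1 _ (by simp))
    refine le_of_tendsto hlim ?_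
    filter_upwards [Ioo_mem_nhdsLT one_pos] with a ha
    obtain ⟨z, hz, hle⟩ := h.exists_mem_sphere_add_mul_le hρ ha.1.le ha.2
    exact hle.trans (hmax hz)

theorem apply_add_smul_eq (h : EikonalOn φ (closedBall x ρ)) {w : F} (hw : ‖w‖ = 1)
    (hρw : φ (x + ρ • w) = φ x + ρ) : ∀ t ∈ Icc 0 ρ, φ (x + t • w) = φ x + t := by
  rintro t ⟨ht₀, htρ⟩
  have hdist : ∀ r s : ℝ, ‖(x + r • w) - (x + s • w)‖ = |r - s| := fun r s => by
    rw [add_sub_add_left_eq_sub, ← sub_smul, norm_smul, hw, mul_one, Real.norm_eq_abs]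
  have ht := add_smul_mem_closedBall_s9 (x := x) hw ht₀ htρ
  have hρ := ht₀.trans htρ
  have h₁ := h.abs_sub_le_norm_sub (convex_closedBall x ρ) ht
    (add_smul_mem_closedBall_s9 hw hρ le_rfl)
  have h₂ := h.abs_sub_le_norm_sub (convex_closedBall x ρ)
    (add_smul_mem_closedBall_s9 hw le_rfl hρ) ht
  rw [hdist, abs_of_nonneg (sub_nonneg.2 htρ)] at h₁
  rw [hdist, zero_smul, add_zero, sub_zero, abs_of_nonneg ht₀] at h₂
  linarith [le_abs_self (φ (x + ρ • w) - φ (x + t • w)), le_abs_self (φ (x + t • w) - φ x)]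

theorem exists_norm_eq_one_forall_apply_add_smul [ProperSpace F]
    (h : EikonalOn φ (closedBall x ρ)) (hρ : 0 < ρ) :
    ∃ w : F, ‖w‖ = 1 ∧ ∀ t ∈ Icc 0 ρ, φ (x + t • w) = φ x + t := by
  obtain ⟨y, hy, hyφ⟩ := h.exists_mem_sphere_eq_add hρ.le
  have hw : ‖ρ⁻¹ • (y - x)‖ = 1 := by
    rw [norm_smul, ← dist_eq_norm, mem_sphere.1 hy, norm_inv, Real.norm_of_nonneg hρ.le,
      inv_mul_cancel₀ hρ.ne']
  refine ⟨ρ⁻¹ • (y - x), hw, h.apply_add_smul_eq hw ?_⟩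
  rwa [smul_smul, mul_inv_cancel₀ hρ.ne', one_smul, add_sub_cancel]

end EikonalOn

end NormedSpace

section InnerProductSpace

variable {E : Type*} [NormedAddCommGroup E] [InnerProductSpace ℝ E] [CompleteSpace E]
  {φ : E → ℝ} {s : Set E} {x : E} {ρ : ℝ}

theorem norm_gradient_eq_norm_fderiv (φ : E → ℝ) (x : E) : ‖gradient φ x‖ = ‖fderiv ℝ φ x‖ :=
  (InnerProductSpace.toDual ℝ E).symm.norm_map _

namespace EikonalOn

theorem gradient_eq_of_forall_apply_add_smul (h : EikonalOn φ s) (hx : x ∈ s) {w : E}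
    (hw : ‖w‖ = 1) {δ : ℝ} (hδ : 0 < δ) (hray : ∀ t ∈ Icc 0 δ, φ (x + t • w) = φ x + t) :
    gradient φ x = w := by
  have hx₁ : ‖gradient φ x‖ = 1 := (norm_gradient_eq_norm_fderiv φ x).trans (h x hx).2
  rw [← inner_eq_one_iff_of_norm_eq_one (𝕜 := ℝ) hx₁ hw, inner_gradient_left]
  exact fderiv_apply_eq_one_of_forall_apply_add_smul (h x hx).1 hδ hray

variable [ProperSpace E]

theorem apply_add_smul_gradient (h : EikonalOn φ (closedBall x ρ)) (hρ : 0 < ρ) :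
    ∀ t ∈ Icc 0 ρ, φ (x + t • gradient φ x) = φ x + t := by
  obtain ⟨w, hw, hray⟩ := h.exists_norm_eq_one_forall_apply_add_smul hρ
  rwa [h.gradient_eq_of_forall_apply_add_smul (mem_closedBall_self hρ.le) hw hρ hray]

theorem forall_apply_add_smul_of_mapClusterPt {p : E} (h : EikonalOn φ (closedBall x (2 * ρ)))
    (hρ : 0 < ρ) (hp : MapClusterPt p (𝓝 x) (gradient φ)) (hp₁ : ‖p‖ = 1) :
    ∀ t ∈ Icc 0 ρ, φ (x + t • p) = φ x + t := by
  rintro t ⟨ht₀, htρ⟩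
  have hball : ∀ y ∈ ball x ρ, closedBall y ρ ⊆ closedBall x (2 * ρ) := fun y hy =>
    closedBall_subset_closedBall' (by linarith [mem_ball.1 hy])
  have hcont : ContinuousAt (fun v => φ (x + t • v)) p :=
    (h _ (closedBall_subset_closedBall (by linarith)
      (add_smul_mem_closedBall_s9 hp₁ ht₀ htρ))).1.continuousAt.comp
      (f := fun v => x + t • v) (by fun_prop)
  have hlim : Tendsto (fun y => φ (x + t • gradient φ y)) (𝓝 x) (𝓝 (φ x + t)) := by
    have hbound : Tendsto (fun y => 2 * ‖y - x‖) (𝓝 x) (𝓝 0) :=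
      (continuous_const.mul (continuous_id.sub continuous_const).norm).tendsto' x 0 (by simp)
    rw [tendsto_iff_norm_sub_tendsto_zero]
    refine squeeze_zero' (Eventually.of_forall fun _ => norm_nonneg _) ?_ hbound
    filter_upwards [ball_mem_nhds x hρ] with y hy
    have hy₁ : ‖gradient φ y‖ = 1 :=
      (norm_gradient_eq_norm_fderiv φ y).trans (h y (hball y hy (mem_closedBall_self hρ.le))).2
    have hray := (h.mono (hball y hy)).apply_add_smul_gradient hρ t ⟨ht₀, htρ⟩
    have h₁ := h.abs_sub_le_norm_sub (convex_closedBall _ _)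
      (hball y hy (add_smul_mem_closedBall_s9 hy₁ ht₀ htρ))
      (closedBall_subset_closedBall (by linarith) (add_smul_mem_closedBall_s9 hy₁ ht₀ htρ))
    have h₂ := h.abs_sub_le_norm_sub (convex_closedBall _ _) (mem_closedBall_self (by linarith))
      (hball y hy (mem_closedBall_self hρ.le))
    rw [add_sub_add_right_eq_sub, norm_sub_rev] at h₁
    rw [Real.norm_eq_abs, abs_le]
    constructor <;> linarith [abs_le.1 h₁, abs_le.1 h₂]
  exact eq_of_nhds_neBot ((hp.continuousAt_comp hcont).clusterPt.mono hlim)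

theorem continuousOn_gradient {Ω : Set E} (hΩ : IsOpen Ω) (h : EikonalOn φ Ω) :
    ContinuousOn (gradient φ) Ω := by
  intro x hx
  obtain ⟨r, hr, hsub⟩ := nhds_basis_closedBall.mem_iff.1 (hΩ.mem_nhds hx)
  have hball : EikonalOn φ (closedBall x (2 * (r / 2))) :=
    h.mono (by rwa [mul_div_cancel₀ _ two_ne_zero])
  refine ContinuousAt.continuousWithinAt <|
    (isCompact_sphere (0 : E) 1).tendsto_nhds_of_unique_mapClusterPt ?_ fun p hp hclus => ?_
  · filter_upwards [hΩ.mem_nhds hx] with y hy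
    rw [mem_sphere_zero_iff_norm, norm_gradient_eq_norm_fderiv, (h y hy).2]
  · have hp₁ : ‖p‖ = 1 := mem_sphere_zero_iff_norm.1 hp
    exact (h.gradient_eq_of_forall_apply_add_smul hx hp₁ (half_pos hr)
      (hball.forall_apply_add_smul_of_mapClusterPt (half_pos hr) hclus hp₁)).symm

end EikonalOn

end InnerProductSpace

theorem eikonal_gradient_continuous {N : ℕ} {Ω : Set (EuclideanSpace ℝ (Fin N))}
    (hΩ : IsOpen Ω) (φ : EuclideanSpace ℝ (Fin N) → ℝ)
    (hdiff : ∀ x ∈ Ω, DifferentiableAt ℝ φ x)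
    (heik : ∀ x ∈ Ω, ‖gradient φ x‖ = 1) :
    ContinuousOn (fun x => gradient φ x) Ω :=
  EikonalOn.continuousOn_gradient hΩ fun x hx =>
    ⟨hdiff x hx, (norm_gradient_eq_norm_fderiv φ x).symm.trans (heik x hx)⟩
end
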